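/- arXiv:math/0505241 — 2 statements merged into one kernel-verified Lean document; each statement's English description precedes it below -/
import Mathlib

section
/- Fix 0 < a ≤ b and c ∈ ℝ. For a standard Brownian motion W started at 0, the probability P(min_{a ≤ s ≤ b} W_s ≥ c) is strictly positive. -/
open MeasureTheory ProbabilityTheory
open scoped NNReal ENNReal

/-- A standard one-dimensional Brownian motion started at `0`: continuous paths,
starts at zero, independent Gaussian increments. -/
structure IsStandardBM {Ω : Type*} [MeasurableSpace Ω] (μ : Measure Ω)
    (W : ℝ → Ω → ℝ) : Prop where
  start : ∀ ω, W 0 ω = 0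
  cont : ∀ ω, Continuous fun t => W t ω
  meas : ∀ t, Measurable (W t)
  incr_law : ∀ s t : ℝ, 0 ≤ s → s ≤ t →
    Measure.map (fun ω => W t ω - W s ω) μ = gaussianReal 0 ((t - s).toNNReal)
  indep_incr : ∀ (n : ℕ) (t : Fin (n + 1) → ℝ), (0 ≤ t 0) → Monotone t →
    iIndepFun
      (fun i : Fin n => fun ω => W (t i.succ) ω - W (t i.castSucc) ω) μ

/-! `W a` is independent of the increments `W s - W a`, `s ≥ a`. Along a dense sequence in
`[a, b]` these increments stay above `-n` with positive probability for some `n`, because every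
path is bounded below on the compact interval; and `W a ≥ c + n` has positive probability because
`W a` is a nondegenerate Gaussian. On the intersection of the two events, `W ≥ c` on the dense
sequence, hence on `[a, b]` by continuity. Independence from countably many increments follows
from independence from finitely many by continuity of the measure from above. -/

open Set

theorem Fin.monotone_cons_iff {α : Type*} [Preorder α] {n : ℕ} {a : α} {f : Fin n → α} :
    Monotone (Fin.cons a f : Fin (n + 1) → α) ↔ (∀ i, a ≤ f i) ∧ Monotone f := by
  simp only [monotone_iff_forall_lt]
  exact Fin.liftFun_cons (· ≤ ·)

theorem Fin.partialSum_sub {G : Type*} [AddCommGroup G] {n : ℕ} (g : Fin (n + 1) → G)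
    (j : Fin (n + 1)) : Fin.partialSum (fun i => g i.succ - g i.castSucc) j = g j - g 0 := by
  refine eq_sub_of_add_eq' ?_
  simpa [sub_eq_neg_add] using congrFun (Fin.partialSum_left_neg g) j

theorem Fin.measurable_partialSum {M : Type*} [AddMonoid M] [MeasurableSpace M]
    [MeasurableAdd₂ M] {n : ℕ} :
    Measurable (Fin.partialSum : (Fin n → M) → Fin (n + 1) → M) := by
  refine measurable_pi_lambda _ fun i => ?_
  induction i using Fin.induction with
  | zero => simp only [Fin.partialSum_zero]; exact measurable_const
  | succ i ih => simp only [Fin.partialSum_succ]; exact ih.add (measurable_pi_apply i)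

section

variable {Ω : Type*} [MeasurableSpace Ω] {μ : Measure Ω}

theorem ProbabilityTheory.iIndepFun.indepFun_zero_succ {β : Type*} [MeasurableSpace β] {n : ℕ}
    {f : Fin (n + 1) → Ω → β} (hf : iIndepFun f μ) (hmeas : ∀ i, Measurable (f i)) :
    IndepFun (f 0) (fun ω (i : Fin n) => f i.succ ω) μ := by
  have h := hf.indepFun_finset {0} {0}ᶜ disjoint_compl_right hmeas
  exact h.comp
    (φ := fun x : ({0} : Finset (Fin (n + 1))) → β => x ⟨0, Finset.mem_singleton_self 0⟩)
    (ψ := fun x : ({0}ᶜ : Finset (Fin (n + 1))) → β => fun i : Fin n => x ⟨i.succ, by simp⟩)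
    (by fun_prop) (by fun_prop)

theorem MeasureTheory.measure_inter_iInter_eq_mul_of_antitone [IsFiniteMeasure μ] {A : Set Ω}
    {C : ℕ → Set Ω} (hA : MeasurableSet A) (hC : ∀ k, MeasurableSet (C k)) (hanti : Antitone C)
    (h : ∀ k, μ (A ∩ C k) = μ A * μ (C k)) :
    μ (A ∩ ⋂ k, C k) = μ A * μ (⋂ k, C k) := by
  have hAC := tendsto_measure_iInter_atTop (μ := μ)
    (fun k => (hA.inter (hC k)).nullMeasurableSet)
    (fun _ _ hij => inter_subset_inter_right _ (hanti hij)) ⟨0, measure_ne_top _ _⟩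
  have hC' := tendsto_measure_iInter_atTop (fun k => (hC k).nullMeasurableSet) hanti
    ⟨0, measure_ne_top μ _⟩
  rw [inter_iInter]
  refine tendsto_nhds_unique hAC ?_
  simpa only [Function.comp_def, h] using ENNReal.Tendsto.const_mul hC' (.inr (measure_ne_top μ A))

variable {W : ℝ → Ω → ℝ} (hW : IsStandardBM μ W)
include hW

theorem IsStandardBM.map_eq_gaussianReal {t : ℝ} (ht : 0 ≤ t) :
    μ.map (W t) = gaussianReal 0 t.toNNReal := by
  simpa [hW.start] using hW.incr_law 0 t le_rfl ht

theorem IsStandardBM.measure_preimage_Ici_pos {t : ℝ} (ht : 0 < t) (r : ℝ) :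
    0 < μ (W t ⁻¹' Ici r) := by
  rw [← Measure.map_apply (hW.meas t) measurableSet_Ici, hW.map_eq_gaussianReal ht.le]
  refine pos_of_ne_zero fun h => ?_
  have := gaussianReal_absolutelyContinuous' 0 (Real.toNNReal_pos.2 ht).ne' h
  simp at this

theorem IsStandardBM.indepFun_sub_of_monotone {a : ℝ} (ha : 0 ≤ a) {k : ℕ} {v : Fin k → ℝ}
    (hv : Monotone v) (hav : ∀ i, a ≤ v i) : IndepFun (W a) (fun ω i => W (v i) ω - W a ω) μ := by
  set w : Fin (k + 1) → ℝ := Fin.cons a v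
  set t : Fin (k + 2) → ℝ := Fin.cons 0 w
  have hw : ∀ i, 0 ≤ w i := Fin.cases ha fun i => ha.trans (hav i)
  have ht : Monotone t := Fin.monotone_cons_iff.2 ⟨hw, Fin.monotone_cons_iff.2 ⟨hav, hv⟩⟩
  have hincr := (hW.indep_incr (k + 1) t le_rfl ht).indepFun_zero_succ
    fun i => (hW.meas _).sub (hW.meas _)
  have hsum : Measurable fun (x : Fin k → ℝ) (j : Fin k) => Fin.partialSum x j.succ :=
    measurable_pi_lambda _ fun j => (measurable_pi_apply j.succ).comp Fin.measurable_partialSum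
  -- the increments along `0 ≤ a ≤ v 0 ≤ ⋯` after the first one sum up to `W (v j) - W a`
  convert hincr.comp measurable_id hsum using 1
  · ext ω; simp [t, w, hW.start]
  · ext ω j
    simpa [t, w] using (Fin.partialSum_sub (fun i => W (w i) ω) j.succ).symm

theorem IsStandardBM.indepFun_sub_finset {a : ℝ} (ha : 0 ≤ a) {s : Finset ℝ}
    (hs : ∀ t ∈ s, a ≤ t) : IndepFun (W a) (fun ω (t : s) => W t ω - W a ω) μ := by
  set e := s.orderIsoOfFin rfl
  have h := hW.indepFun_sub_of_monotone ha (v := fun i => (e i : ℝ))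
    (Subtype.mono_coe _ |>.comp e.monotone) fun i => hs _ (e i).2
  have hψ : Measurable fun (x : Fin s.card → ℝ) (t : s) => x (e.symm t) := by fun_prop
  convert h.comp measurable_id hψ using 1
  · rfl
  · funext ω t
    simp

theorem IsStandardBM.measure_inter_eq_mul [IsFiniteMeasure μ] {a : ℝ} (ha : 0 ≤ a)
    {S : Set ℝ} (hS : MeasurableSet S) {u : ℕ → ℝ} (hu : ∀ j, a ≤ u j) (r : ℝ) :
    μ (W a ⁻¹' S ∩ {ω | ∀ j, r ≤ W (u j) ω - W a ω}) =
      μ (W a ⁻¹' S) * μ {ω | ∀ j, r ≤ W (u j) ω - W a ω} := by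
  set C : ℕ → Set Ω := fun k =>
    (fun ω (t : (Finset.range k).image u) => W t ω - W a ω) ⁻¹' univ.pi fun _ => Ici r
  have hC : {ω | ∀ j, r ≤ W (u j) ω - W a ω} = ⋂ k, C k := by
    ext ω
    simp only [C, mem_ofPred_eq, mem_iInter, mem_preimage, mem_univ_pi, mem_Ici, Subtype.forall,
      Finset.forall_mem_image, Finset.mem_range]
    exact ⟨fun h k j _ => h j, fun h j => h (j + 1) j.lt_succ_self⟩
  have hset : ∀ s : Finset ℝ, MeasurableSet (univ.pi fun _ : s => Ici r) := fun _ =>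
    MeasurableSet.univ_pi fun _ => measurableSet_Ici
  have hmeas : ∀ s : Finset ℝ, Measurable fun ω (t : s) => W t ω - W a ω := fun s =>
    measurable_pi_lambda _ fun t => (hW.meas t).sub (hW.meas a)
  rw [hC]
  refine measure_inter_iInter_eq_mul_of_antitone (hW.meas a hS) (fun k => ?_)
    (fun k l hkl ω hω => ?_) fun k => ?_
  · exact hmeas _ (hset _)
  · simp only [C, mem_preimage, mem_univ_pi, Subtype.forall] at hω ⊢
    exact fun t ht => hω t (Finset.image_subset_image (Finset.range_mono hkl) ht)
  · exact (hW.indepFun_sub_finset ha (by simp [hu])).measure_inter_preimage_eq_mul _ _ hS (hset _)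

end

/-- For `0 < a ≤ b` and `c ∈ ℝ`,
`P(min_{a ≤ s ≤ b} W_s ≥ c) > 0` for a standard Brownian motion `W`. -/
theorem stmt_8 {Ω : Type*} [MeasurableSpace Ω] (μ : Measure Ω) [IsProbabilityMeasure μ]
    (W : ℝ → Ω → ℝ) (hW : IsStandardBM μ W) (a b c : ℝ) (ha : 0 < a) (hab : a ≤ b) :
    0 < μ {ω | ∀ s ∈ Set.Icc a b, c ≤ W s ω} := by
  have : Nonempty (Icc a b) := ⟨⟨a, left_mem_Icc.2 hab⟩⟩
  obtain ⟨u, hu⟩ := TopologicalSpace.exists_dense_seq (Icc a b)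
  set B : ℕ → Set Ω := fun n => {ω | ∀ j, -(n : ℝ) ≤ W (u j) ω - W a ω}
  have hB : ⋃ n, B n = univ := eq_univ_of_forall fun ω => by
    obtain ⟨m, hm⟩ := isCompact_Icc.bddBelow_image (hW.cont ω).continuousOn (K := Icc a b)
    obtain ⟨n, hn⟩ := exists_nat_ge (W a ω - m)
    refine mem_iUnion.2 ⟨n, fun j => ?_⟩
    have := hm (mem_image_of_mem _ (u j).2)
    linarith
  obtain ⟨n, hn⟩ : ∃ n, 0 < μ (B n) :=
    exists_measure_pos_of_not_measure_iUnion_null (by simp [hB])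
  calc 0 < μ (W a ⁻¹' Ici (c + n)) * μ (B n) :=
        ENNReal.mul_pos (hW.measure_preimage_Ici_pos ha _).ne' hn.ne'
    _ = μ (W a ⁻¹' Ici (c + n) ∩ B n) :=
        (hW.measure_inter_eq_mul ha.le measurableSet_Ici (fun j => (u j).2.1) _).symm
    _ ≤ μ {ω | ∀ s ∈ Icc a b, c ≤ W s ω} := measure_mono fun ω ⟨hωa, hωB⟩ s hs =>
        hu.induction_on (p := fun s : Icc a b => c ≤ W s ω) ⟨s, hs⟩
          (isClosed_le continuous_const ((hW.cont ω).comp continuous_subtype_val)) fun j => by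
            have := hωB j
            simp only [mem_preimage, mem_Ici] at hωa
            linarith
end

section
/- Let f : [0,∞) → ℝ be continuous on [a,M] with 0 < a < M < ∞, and let g : [0,1] → ℝ be continuous and bounded. Then lim_{h→0+} ∫_a^M f(s) g(s/h − ⌊s/h⌋) ds = (∫_a^M f(s) ds) · (∫₀¹ g(u) du). -/
/-!
If `ψ` is periodic with mean zero, its primitive `Ψ` is periodic and continuous, hence bounded,
so `∫ s in u..v, ψ (s / h) = h * (Ψ (v / h) - Ψ (u / h)) = O(h)`. Applied to
`ψ = g ∘ fract - ∫₀¹ g`, the uniformly bounded functions `s ↦ ψ (s / h)` tend to `0` weakly when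
tested against indicators of intervals. Approximating `f` by a step function on a fine uniform
partition of `[a, M]` (uniform continuity) upgrades this to `∫ f(s) ψ(s/h) ds → 0`.
-/

open MeasureTheory Filter intervalIntegral Set Topology

namespace Function.Periodic

variable {ψ : ℝ → ℝ} {T : ℝ}

theorem periodic_primitive (hψ : Periodic ψ T)
    (hint : ∀ t₁ t₂, IntervalIntegrable ψ volume t₁ t₂) (hmean : ∫ x in 0..T, ψ x = 0) :
    Periodic (fun t => ∫ x in 0..t, ψ x) T := fun t => by
  simp only [hψ.intervalIntegral_add_eq_add 0 t hint, zero_add, hmean, add_zero]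

theorem tendsto_intervalIntegral_comp_div_zero (hψ : Periodic ψ T) (hT : T ≠ 0)
    (hint : ∀ t₁ t₂, IntervalIntegrable ψ volume t₁ t₂) (hmean : ∫ x in 0..T, ψ x = 0)
    (u v : ℝ) : Tendsto (fun h => ∫ s in u..v, ψ (s / h)) (𝓝[≠] 0) (𝓝 0) := by
  set Ψ : ℝ → ℝ := fun t => ∫ x in 0..t, ψ x
  obtain ⟨B, hB⟩ := isBounded_iff_forall_norm_le.mp
    ((hψ.periodic_primitive hint hmean).isBounded_of_continuous hT (continuous_primitive hint 0))
  have hrescale : ∀ h ≠ 0, ∫ s in u..v, ψ (s / h) = h * (Ψ (v / h) - Ψ (u / h)) := fun h hh => by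
    rw [integral_comp_div _ hh, smul_eq_mul, integral_interval_sub_left (hint _ _) (hint _ _)]
  have hbdd : IsBoundedUnder (· ≤ ·) (𝓝[≠] 0) fun h : ℝ => ‖Ψ (v / h) - Ψ (u / h)‖ :=
    isBoundedUnder_of ⟨B + B, fun h => (norm_sub_le _ _).trans
      (add_le_add (hB _ (mem_range_self _)) (hB _ (mem_range_self _)))⟩
  exact ((tendsto_nhdsWithin_of_tendsto_nhds tendsto_id).zero_mul_isBoundedUnder_le hbdd).congr'
    (eventually_nhdsWithin_of_forall fun h hh => (hrescale h hh).symm)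

end Function.Periodic

noncomputable def partitionPoint (a b : ℝ) (N k : ℕ) : ℝ := a + k * ((b - a) / N)

section partitionPoint

variable {a b : ℝ} {N : ℕ}

theorem partitionPoint_zero : partitionPoint a b N 0 = a := by simp [partitionPoint]

theorem partitionPoint_self (hN : N ≠ 0) : partitionPoint a b N N = b := by
  simp only [partitionPoint]
  rw [mul_div_cancel₀ _ (Nat.cast_ne_zero.mpr hN : (N : ℝ) ≠ 0), add_sub_cancel]

theorem partitionPoint_succ_sub (k : ℕ) :
    partitionPoint a b N (k + 1) - partitionPoint a b N k = (b - a) / N := by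
  simp only [partitionPoint]; push_cast; ring

theorem partitionPoint_mem_Icc (hab : a ≤ b) {k : ℕ} (hk : k ≤ N) :
    partitionPoint a b N k ∈ Icc a b := by
  have hΔ : 0 ≤ (b - a) / N := div_nonneg (sub_nonneg.mpr hab) N.cast_nonneg
  have hkN : (k : ℝ) * ((b - a) / N) ≤ b - a := by
    rcases N.eq_zero_or_pos with rfl | hN
    · simpa using hab
    · calc (k : ℝ) * ((b - a) / N) ≤ N * ((b - a) / N) := by gcongr
        _ = b - a := mul_div_cancel₀ _ (by positivity)
  constructor <;> simp only [partitionPoint] <;> nlinarith [mul_nonneg k.cast_nonneg hΔ]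

end partitionPoint

theorem abs_integral_mul_sub_le {F φ : ℝ → ℝ} {u v η K : ℝ} (huv : u ≤ v)
    (hF : ContinuousOn F (Icc u v)) (hφ : IntervalIntegrable φ volume u v)
    (hFη : ∀ s ∈ Icc u v, |F s - F u| ≤ η) (hφK : ∀ s ∈ Icc u v, |φ s| ≤ K) :
    |(∫ s in u..v, F s * φ s) - F u * ∫ s in u..v, φ s| ≤ η * K * (v - u) := by
  have hη : 0 ≤ η := (abs_nonneg _).trans (hFη u (left_mem_Icc.mpr huv))
  rw [← intervalIntegral.integral_const_mul,
    ← integral_sub (hφ.continuousOn_mul (by rwa [uIcc_of_le huv])) (hφ.const_mul _),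
    ← abs_of_nonneg (sub_nonneg.mpr huv), ← Real.norm_eq_abs]
  refine intervalIntegral.norm_integral_le_of_norm_le_const fun s hs => ?_
  have hs' : s ∈ Icc u v := Ioc_subset_Icc_self (uIoc_of_le huv ▸ hs)
  rw [← sub_mul, Real.norm_eq_abs, abs_mul]
  exact mul_le_mul (hFη s hs') (hφK s hs') (abs_nonneg _) hη

theorem abs_integral_mul_sub_sum_le {F φ : ℝ → ℝ} {a b η K : ℝ} {N : ℕ} (hN : N ≠ 0)
    (hab : a ≤ b) (hF : ContinuousOn F (Icc a b)) (hφ : IntervalIntegrable φ volume a b)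
    (hφK : ∀ s ∈ Icc a b, |φ s| ≤ K)
    (hFη : ∀ s ∈ Icc a b, ∀ t ∈ Icc a b, dist s t ≤ (b - a) / N → dist (F s) (F t) ≤ η) :
    |(∫ s in a..b, F s * φ s) - ∑ k ∈ Finset.range N, F (partitionPoint a b N k) *
      ∫ s in partitionPoint a b N k..partitionPoint a b N (k + 1), φ s| ≤ η * K * (b - a) := by
  set x := partitionPoint a b N
  have hx_le : ∀ k, x k ≤ x (k + 1) := fun k => sub_nonneg.mp <| by
    rw [partitionPoint_succ_sub]; exact div_nonneg (sub_nonneg.mpr hab) N.cast_nonneg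
  have hsub : ∀ k < N, Icc (x k) (x (k + 1)) ⊆ Icc a b := fun k hk =>
    Icc_subset_Icc (partitionPoint_mem_Icc hab hk.le).1 (partitionPoint_mem_Icc hab hk).2
  have hsub' : ∀ k < N, uIcc (x k) (x (k + 1)) ⊆ uIcc a b := fun k hk => by
    rw [uIcc_of_le (hx_le k), uIcc_of_le hab]; exact hsub k hk
  have hFφ : IntervalIntegrable (fun s => F s * φ s) volume a b :=
    hφ.continuousOn_mul (by rwa [uIcc_of_le hab])
  have hsplit : ∫ s in a..b, F s * φ s =
      ∑ k ∈ Finset.range N, ∫ s in x k..x (k + 1), F s * φ s := by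
    rw [sum_integral_adjacent_intervals fun k hk => hFφ.mono_set (hsub' k hk)]
    rw [show x 0 = a from partitionPoint_zero, show x N = b from partitionPoint_self hN]
  rw [hsplit, ← Finset.sum_sub_distrib]
  calc _ ≤ ∑ k ∈ Finset.range N, η * K * ((b - a) / N) := by
        refine (Finset.abs_sum_le_sum_abs _ _).trans (Finset.sum_le_sum fun k hk => ?_)
        have hk := Finset.mem_range.mp hk
        rw [← partitionPoint_succ_sub k]
        refine abs_integral_mul_sub_le (hx_le k) (hF.mono (hsub k hk))
          (hφ.mono_set (hsub' k hk)) (fun s hs => ?_) (fun s hs => hφK s (hsub k hk hs))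
        refine hFη s (hsub k hk hs) (x k) (hsub k hk (left_mem_Icc.mpr (hx_le k))) ?_
        rw [Real.dist_eq, abs_of_nonneg (sub_nonneg.mpr hs.1), ← partitionPoint_succ_sub k]
        linarith [hs.2]
    _ = η * K * (b - a) := by
        rw [Finset.sum_const, Finset.card_range, nsmul_eq_mul]
        field_simp

theorem tendsto_integral_mul_of_tendsto_integral {ι : Type*} {l : Filter ι} {F : ℝ → ℝ}
    {φ : ι → ℝ → ℝ} {a b K : ℝ} (hab : a ≤ b) (hF : ContinuousOn F (Icc a b))
    (hφK : ∀ i, ∀ s ∈ Icc a b, |φ i s| ≤ K) (hφint : ∀ i, IntervalIntegrable (φ i) volume a b)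
    (hφ : ∀ u ∈ Icc a b, ∀ v ∈ Icc a b, Tendsto (fun i => ∫ s in u..v, φ i s) l (𝓝 0)) :
    Tendsto (fun i => ∫ s in a..b, F s * φ i s) l (𝓝 0) := by
  rw [Metric.tendsto_nhds]
  intro ε hε
  have hba : 0 ≤ b - a := sub_nonneg.mpr hab
  set η := ε / (2 * (|K| * (b - a) + 1)) with hη_def
  have hL : 0 < |K| * (b - a) + 1 := by positivity
  have hη : 0 < η := by positivity
  have hηK : η * K * (b - a) < ε / 2 := calc
    η * K * (b - a) ≤ η * (|K| * (b - a)) := by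
      rw [← mul_assoc]; gcongr; exact le_abs_self K
    _ < η * (|K| * (b - a) + 1) := by gcongr; linarith
    _ = ε / 2 := by rw [hη_def]; field_simp
  obtain ⟨δ, hδ, hFδ⟩ := Metric.uniformContinuousOn_iff_le.mp
    (isCompact_Icc.uniformContinuousOn_of_continuous hF) η hη
  obtain ⟨N, hN⟩ := exists_nat_gt ((b - a) / δ)
  have hN0 : N ≠ 0 := by
    rintro rfl; exact (div_nonneg hba hδ.le).not_gt (by exact_mod_cast hN)
  have hmesh : (b - a) / N ≤ δ := by
    rw [div_le_iff₀ (by positivity)]; rw [div_lt_iff₀ hδ] at hN; linarith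
  set x := partitionPoint a b N
  have hsum : Tendsto (fun i => ∑ k ∈ Finset.range N, F (x k) * ∫ s in x k..x (k + 1), φ i s)
      l (𝓝 0) := by
    simpa using tendsto_finsetSum (Finset.range N) fun k hk =>
      (hφ _ (partitionPoint_mem_Icc hab (Finset.mem_range.mp hk).le) _
        (partitionPoint_mem_Icc hab (Finset.mem_range.mp hk))).const_mul (F (x k))
  filter_upwards [Metric.tendsto_nhds.mp hsum (ε / 2) (half_pos hε)] with i hi
  have hclose := abs_integral_mul_sub_sum_le hN0 hab hF (hφint i) (hφK i)
    fun s hs t ht hst => hFδ s hs t ht (hst.trans hmesh)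
  rw [Real.dist_eq, sub_zero] at hi ⊢
  linarith [abs_sub_abs_le_abs_sub (∫ s in a..b, F s * φ i s)
    (∑ k ∈ Finset.range N, F (x k) * ∫ s in x k..x (k + 1), φ i s)]

theorem intervalIntegrable_comp_div {ψ : ℝ → ℝ} (hψ : ∀ u v, IntervalIntegrable ψ volume u v)
    (h a b : ℝ) : IntervalIntegrable (fun s => ψ (s / h)) volume a b := by
  rcases eq_or_ne h 0 with rfl | hh
  · simp -- `s / 0 = 0`: the integrand is constant
  simpa only [div_inv_eq_mul, div_mul_cancel₀ _ hh, ← div_eq_mul_inv] using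
    (hψ (a / h) (b / h)).comp_mul_right (c := h⁻¹)

theorem Function.Periodic.tendsto_integral_mul_comp_div {G f : ℝ → ℝ} {T K a b : ℝ}
    (hG : Periodic G T) (hT : T ≠ 0) (hGint : ∀ u v, IntervalIntegrable G volume u v)
    (hGK : ∀ t, |G t| ≤ K) (hab : a ≤ b) (hf : ContinuousOn f (Icc a b)) :
    Tendsto (fun h => ∫ s in a..b, f s * G (s / h)) (𝓝[≠] 0)
      (𝓝 ((∫ s in a..b, f s) * (T⁻¹ * ∫ t in 0..T, G t))) := by
  set m := T⁻¹ * ∫ t in 0..T, G t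
  set ψ := fun t => G t - m
  have hψ : Periodic ψ T := fun t => by simp only [ψ, hG t]
  have hψint : ∀ u v, IntervalIntegrable ψ volume u v := fun u v =>
    (hGint u v).sub intervalIntegrable_const
  have hψmean : ∫ t in 0..T, ψ t = 0 := by
    rw [integral_sub (hGint 0 T) intervalIntegrable_const, intervalIntegral.integral_const,
      smul_eq_mul, sub_zero, mul_inv_cancel_left₀ hT, sub_self]
  have hfψ : Tendsto (fun h => ∫ s in a..b, f s * ψ (s / h)) (𝓝[≠] 0) (𝓝 0) :=
    tendsto_integral_mul_of_tendsto_integral hab hf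
      (fun h s _ => (abs_sub _ _).trans (add_le_add_left (hGK _) _))
      (fun h => intervalIntegrable_comp_div hψint h a b)
      fun u _ v _ => hψ.tendsto_intervalIntegral_comp_div_zero hT hψint hψmean u v
  have hsplit : ∀ h, ∫ s in a..b, f s * G (s / h) =
      (∫ s in a..b, f s * ψ (s / h)) + (∫ s in a..b, f s) * m := fun h => by
    rw [← intervalIntegral.integral_mul_const, ← integral_add
      ((intervalIntegrable_comp_div hψint h a b).continuousOn_mul (by rwa [uIcc_of_le hab]))
      ((hf.intervalIntegrable_of_Icc hab).mul_const m)]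
    simp only [ψ, mul_sub, sub_add_cancel]
  simpa only [hsplit, zero_add] using hfψ.add_const ((∫ s in a..b, f s) * m)

theorem intervalIntegral_comp_fract (g : ℝ → ℝ) :
    ∫ t in (0 : ℝ)..1, g (Int.fract t) = ∫ t in (0 : ℝ)..1, g t :=
  integral_congr_uIoo fun t ht => by
    rw [uIoo_of_le zero_le_one] at ht
    rw [Int.fract_eq_self.mpr ⟨ht.1.le, ht.2⟩]

theorem ContinuousOn.intervalIntegrable_comp_fract {g : ℝ → ℝ} (hg : ContinuousOn g (Icc 0 1))
    (u v : ℝ) : IntervalIntegrable (fun t => g (Int.fract t)) volume u v := by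
  refine Function.Periodic.intervalIntegrable₀ (fun t => by simp only [Int.fract_add_one])
    one_ne_zero ((intervalIntegrable_congr_uIoo fun t ht => ?_).mpr
      (hg.intervalIntegrable_of_Icc zero_le_one)) u v
  rw [uIoo_of_le zero_le_one] at ht
  rw [Int.fract_eq_self.mpr ⟨ht.1.le, ht.2⟩]

theorem stmt_10_general (a M : ℝ) (haM : a < M) (f g : ℝ → ℝ)
    (hf : ContinuousOn f (Set.Icc a M))
    (hg : ContinuousOn g (Set.Icc 0 1)) :
    Tendsto (fun h : ℝ => ∫ s in a..M, f s * g (Int.fract (s / h)))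
      (nhdsWithin 0 (Set.Ioi 0))
      (nhds ((∫ s in a..M, f s) * ∫ u in (0:ℝ)..1, g u)) := by
  obtain ⟨B, hB⟩ := isCompact_Icc.exists_bound_of_continuousOn hg
  have hG : Function.Periodic (fun t => g (Int.fract t)) 1 := fun t => by
    simp only [Int.fract_add_one]
  have key := hG.tendsto_integral_mul_comp_div one_ne_zero hg.intervalIntegrable_comp_fract
    (fun t => hB _ (unitInterval.fract_mem t)) haM.le hf
  rw [inv_one, one_mul, intervalIntegral_comp_fract] at key
  exact key.mono_left (nhdsWithin_mono _ fun h hh => ne_of_gt hh)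

/-- Equidistribution of fractional parts: if `f` is continuous on `[a,M]`
(`0 < a < M`) and `g` is continuous and bounded on `[0,1]`, then
`∫_a^M f(s) g({s/h}) ds → (∫_a^M f) (∫₀¹ g)` as `h → 0⁺`, where `{x} = x − ⌊x⌋`. -/
theorem stmt_10 (a M : ℝ) (ha : 0 < a) (haM : a < M) (f g : ℝ → ℝ)
    (hf : ContinuousOn f (Set.Icc a M))
    (hg : ContinuousOn g (Set.Icc 0 1)) (C : ℝ) (hgb : ∀ u ∈ Set.Icc (0:ℝ) 1, |g u| ≤ C) :
    Tendsto (fun h : ℝ => ∫ s in a..M, f s * g (Int.fract (s / h)))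
      (nhdsWithin 0 (Set.Ioi 0))
      (nhds ((∫ s in a..M, f s) * ∫ u in (0:ℝ)..1, g u)) :=
  stmt_10_general a M haM f g hf hg
end
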